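/- Let m, n ≥ 1 and let Γ_{m,n} be the presented group ⟨x_m, t_m, x_n, t_n | ρ_m(x_m,t_m), ρ_n(x_n,t_n), x_m^m, x_n^n⟩. Then every element of finite order in Γ_{m,n} is conjugate in Γ_{m,n} to an element of the subgroup H_m generated by {x_m, t_m x_m t_m⁻¹} or to an element of the subgroup H_n generated by {x_n, t_n x_n t_n⁻¹}. -/

import Mathlib

/-!
Write `G_k = ⟨x, t | ρ_k(x, t), x^k⟩`, so that `Γ_{m,n} = G_m * G_n`. The relation `ρ_k` only
involves `x` and `y = t x t⁻¹`, so whenever `x, t` satisfy the relations of `G_k` in some group,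
so do the generators of the HNN extension of the subgroup `⟨x, y⟩` whose stable letter conjugates
`⟨x⟩` onto `⟨y⟩`. Hence `Γ_{m,n}` maps to the free product of the HNN extensions of `H_m` and
`H_n`, with the canonical map back as a left inverse. In a free product a torsion element is
conjugate into a factor, and in an HNN extension into the base group: after cyclic reduction, a
word that still involves the stable letter has nonempty reduced powers, which are nontrivial by
Britton's lemma.
-/

/-- The word `ρ_k(x,t) = (t x t⁻¹) x (t x t⁻¹)⁻¹ x^{-(k+1)}`, evaluated at elements
`x`, `t` of a group. -/
def rhoWord {G : Type*} [Group G] (k : ℕ) (x t : G) : G :=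
  (t * x * t⁻¹) * x * (t * x * t⁻¹)⁻¹ * x ^ (-(k + 1 : ℤ))

theorem map_rhoWord {G H : Type*} [Group G] [Group H] (f : G →* H) (k : ℕ) (x t : G) :
    f (rhoWord k x t) = rhoWord k (f x) (f t) := by
  simp [rhoWord]

namespace Monoid.CoprodI

variable {ι : Type*} {G : ι → Type*} [∀ i, Group (G i)]

theorem NeWord.prod_ne_one {i j : ι} (w : NeWord G i j) : w.prod ≠ 1 := fun h =>
  w.toList_ne_nil <| by
    classical
    have : w.toWord = Word.empty := by
      rw [← Word.equiv.apply_symm_apply w.toWord]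
      exact (congrArg Word.equiv h).trans (Word.equiv.apply_symm_apply Word.empty)
    exact congrArg Word.toList this

theorem NeWord.not_isOfFinOrder_prod {i j : ι} (w : NeWord G i j) (hij : i ≠ j) :
    ¬IsOfFinOrder w.prod := by
  have hpow : ∀ n : ℕ, ∃ w' : NeWord G i j, w'.prod = w.prod ^ (n + 1) := by
    intro n
    induction n with
    | zero => exact ⟨w, (pow_one _).symm⟩
    | succ n ih =>
      obtain ⟨w', hw'⟩ := ih
      exact ⟨w.append hij.symm w', by rw [NeWord.append_prod, hw', ← pow_succ']⟩
  rintro ⟨n, hn, hfix⟩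
  obtain ⟨k, rfl⟩ := Nat.exists_eq_succ_of_ne_zero hn.ne'
  obtain ⟨w', hw'⟩ := hpow k
  exact w'.prod_ne_one (hw'.trans (isPeriodicPt_mul_iff_pow_eq_one _ |>.mp hfix))

/-- Conjugating by the last letter merges it into the first one. -/
theorem Word.exists_isConj_length_lt {w : Word G} {i : ι} {a b : G i}
    {l : List (Σ i, G i)} (hw : w.toList = ⟨i, a⟩ :: (l ++ [⟨i, b⟩])) :
    ∃ w' : Word G, IsConj w.prod w'.prod ∧ w'.toList.length < w.toList.length := by
  classical
  have hchain := w.chain_ne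
  rw [hw] at hchain
  let v : Word G :=
    ⟨l, fun x hx => w.ne_one x (by simp [hw, hx]),
      (List.isChain_append.mp (List.isChain_cons.mp hchain).2).1⟩
  have hv : v.fstIdx ≠ some i := by
    rw [Word.fstIdx_ne_iff]
    intro x (hx : l.head? = some x)
    exact (List.isChain_cons.mp hchain).1 x (by simp [hx])
  have hconj : IsConj w.prod (of (b * a) * v.prod) := by
    refine isConj_iff.mpr ⟨of b, ?_⟩
    simp [Word.prod, hw, v, mul_assoc]
  by_cases hba : b * a = 1
  · refine ⟨v, by simpa [hba] using hconj, by simp [hw, v]⟩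
  · refine ⟨Word.cons (b * a) v hv hba, by simpa using hconj, by simp [hw, v]⟩

theorem Word.exists_isConj_of_of_isOfFinOrder [Nonempty ι] (w : Word G)
    (hw : IsOfFinOrder w.prod) : ∃ (i : ι) (h : G i), IsConj w.prod (of h) := by
  classical
  rcases hl : w.toList with _ | ⟨⟨i, a⟩, rest⟩
  · exact ⟨Classical.arbitrary ι, 1, by simp [Word.prod, hl]⟩
  rcases rest.eq_nil_or_concat with rfl | ⟨l, ⟨j, b⟩, rfl⟩
  · exact ⟨i, a, by rw [show w.prod = of a by simp [Word.prod, hl]]⟩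
  rw [List.concat_eq_append] at hl
  obtain rfl | hij := eq_or_ne i j
  · obtain ⟨w', hconj, hlen⟩ := Word.exists_isConj_length_lt hl
    obtain ⟨k, h, hw'⟩ := Word.exists_isConj_of_of_isOfFinOrder w' (hconj.isOfFinOrder hw)
    exact ⟨k, h, hconj.trans hw'⟩
  · obtain ⟨i', j', v, rfl⟩ := NeWord.of_word w (fun h => by simp [h] at hl)
    have hhead := v.toList_head?
    have hlast := v.toList_getLast?
    change v.toList = _ at hl
    rw [hl] at hhead hlast
    rw [← List.cons_append, List.getLast?_concat, Option.some_inj] at hlast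
    simp only [List.head?_cons, Option.some_inj] at hhead
    cases congrArg Sigma.fst hhead
    cases congrArg Sigma.fst hlast
    exact absurd hw (v.not_isOfFinOrder_prod hij)
termination_by w.toList.length

theorem exists_isConj_of_of_isOfFinOrder [Nonempty ι] {g : CoprodI G} (hg : IsOfFinOrder g) :
    ∃ (i : ι) (h : G i), IsConj g (of h) := by
  classical
  have hprod : (Word.equiv g).prod = g := Word.equiv.symm_apply_apply g
  rw [← hprod] at hg ⊢
  exact Word.exists_isConj_of_of_isOfFinOrder _ hg

end Monoid.CoprodI

namespace HNNExtension

open NormalWord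

variable {G : Type*} [Group G] {A B : Subgroup G} {φ : A ≃* B}

theorem of_toSubgroupEquiv (u : ℤˣ) (a : toSubgroup A B u) :
    (of (toSubgroupEquiv φ u a : G) : HNNExtension G A B φ) =
      t ^ (u : ℤ) * of (a : G) * t ^ (-(u : ℤ)) := by
  rcases Int.units_eq_one_or u with rfl | rfl
  · exact equiv_eq_conj (φ := φ) a
  · exact equiv_symm_eq_conj (φ := φ) a

namespace NormalWord.ReducedWord

/-- No cancellation `t^u g t^-u` with `g ∈ toSubgroup A B u` across the end of the word. -/
def IsCyclicallyReduced (w : ReducedWord G A B) : Prop :=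
  ∀ x ∈ w.toList.getLast?, ∀ y ∈ w.toList.head?, x.2 ∈ toSubgroup A B x.1 → x.1 = y.1

theorem not_isOfFinOrder_prod (w : ReducedWord G A B) (h1 : w.head = 1) (hne : w.toList ≠ [])
    (hcyc : w.IsCyclicallyReduced) : ¬IsOfFinOrder (w.prod φ) := by
  have hpow : ∀ n : ℕ, ∃ w' : ReducedWord G A B, w'.head = 1 ∧ w'.toList ≠ [] ∧
      w'.toList.head? = w.toList.head? ∧ w'.prod φ = w.prod φ ^ (n + 1) := by
    intro n
    induction n with
    | zero => exact ⟨w, h1, hne, rfl, (pow_one _).symm⟩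
    | succ n ih =>
      obtain ⟨w', h1', hne', hhead, hprod⟩ := ih
      refine ⟨⟨1, w.toList ++ w'.toList, w.chain.append w'.chain ?_⟩, rfl, by simp [hne],
        List.head?_append_of_ne_nil _ hne, ?_⟩
      · rw [hhead]
        exact hcyc
      · rw [pow_succ', ← hprod]
        simp [ReducedWord.prod, h1, h1']
  rintro ⟨n, hn, hfix⟩
  obtain ⟨k, rfl⟩ := Nat.exists_eq_succ_of_ne_zero hn.ne'
  obtain ⟨w', -, hne', -, hprod⟩ := hpow k
  refine hne' (HNNExtension.ReducedWord.toList_eq_nil_of_mem_of_range φ w' ⟨1, ?_⟩)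
  rw [map_one, hprod, (isPeriodicPt_mul_iff_pow_eq_one _).mp hfix]

theorem exists_isConj_head_eq_one (w : ReducedWord G A B) (hne : w.toList ≠ []) :
    ∃ w' : ReducedWord G A B, w'.head = 1 ∧ w'.toList.length = w.toList.length ∧
      IsConj (w.prod φ) (w'.prod φ) := by
  obtain ⟨l, ⟨u, b⟩, hl⟩ := w.toList.eq_nil_or_concat.resolve_left hne
  rw [List.concat_eq_append] at hl
  have hchain := w.chain
  rw [hl, List.isChain_append] at hchain
  refine ⟨⟨1, l ++ [(u, b * w.head)], List.isChain_append.mpr ⟨hchain.1,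
      List.isChain_singleton _, fun x hx y hy => ?_⟩⟩, rfl, by simp [hl],
    isConj_iff.mpr ⟨(of w.head)⁻¹, ?_⟩⟩
  · obtain rfl : y = (u, b * w.head) := by simpa using hy.symm
    exact hchain.2.2 x hx (u, b) rfl
  · simp [ReducedWord.prod, hl, mul_assoc]

/-- Conjugating by the last letter `t^u a` cancels it against the first letter `t^-u g`. -/
theorem exists_isConj_length_lt (w : ReducedWord G A B) (h1 : w.head = 1)
    (hcyc : ¬w.IsCyclicallyReduced) :
    ∃ w' : ReducedWord G A B, w'.toList.length < w.toList.length ∧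
      IsConj (w.prod φ) (w'.prod φ) := by
  simp only [IsCyclicallyReduced, not_forall] at hcyc
  obtain ⟨⟨u, a⟩, hlast, ⟨u₁, g₁⟩, hhead, ha, hu⟩ := hcyc
  obtain ⟨ys, hys⟩ := List.getLast?_eq_some_iff.mp hlast
  rcases ys with _ | ⟨y, l₁⟩
  · simp only [hys, List.nil_append, List.head?_cons, Option.mem_def, Option.some_inj] at hhead
    exact absurd (congrArg Prod.fst hhead) hu
  obtain rfl : y = (u₁, g₁) := by simpa [hys] using hhead
  have hu₁ : u₁ = -u := Int.units_ne_iff_eq_neg.mp (Ne.symm hu)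
  have hchain := w.chain
  rw [hys, List.cons_append, List.isChain_cons, List.isChain_append] at hchain
  refine ⟨⟨(toSubgroupEquiv φ u ⟨a, ha⟩ : G) * g₁, l₁, hchain.2.1⟩, by simp [hys],
    isConj_iff.mpr ⟨t ^ (u : ℤ) * of a, ?_⟩⟩
  simp [ReducedWord.prod, h1, hys, hu₁, of_toSubgroupEquiv, mul_assoc]

theorem exists_isConj_of_of_isOfFinOrder (w : ReducedWord G A B)
    (hw : IsOfFinOrder (w.prod φ)) : ∃ g : G, IsConj (w.prod φ) (of g) := by
  by_cases hne : w.toList = []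
  · exact ⟨w.head, by rw [show w.prod φ = of w.head by simp [ReducedWord.prod, hne]]⟩
  obtain ⟨w', h1, hlen, hconj⟩ := w.exists_isConj_head_eq_one (φ := φ) hne
  by_cases hcyc : w'.IsCyclicallyReduced
  · exact absurd (hconj.isOfFinOrder hw)
      (w'.not_isOfFinOrder_prod h1 (by simpa [← List.length_eq_zero_iff, hlen] using hne) hcyc)
  obtain ⟨w'', hlt, hconj'⟩ := w'.exists_isConj_length_lt (φ := φ) h1 hcyc
  obtain ⟨g, hg⟩ := w''.exists_isConj_of_of_isOfFinOrder ((hconj.trans hconj').isOfFinOrder hw)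
  exact ⟨g, hconj.trans (hconj'.trans hg)⟩
termination_by w.toList.length

end NormalWord.ReducedWord

theorem exists_isConj_of_of_isOfFinOrder {x : HNNExtension G A B φ} (hx : IsOfFinOrder x) :
    ∃ g : G, IsConj x (of g) := by
  obtain ⟨d⟩ := TransversalPair.nonempty G A B
  have hprod : (NormalWord.equiv φ d x).prod φ = x := (NormalWord.equiv φ d).symm_apply_apply x
  rw [← hprod] at hx ⊢
  exact ReducedWord.exists_isConj_of_of_isOfFinOrder _ hx

end HNNExtension

open Subgroup

section ConjHNN

variable {Γ : Type*} [Group Γ] (x t : Γ)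

theorem Subgroup.zpowers_le_closure_pair_left : zpowers x ≤ closure {x, t * x * t⁻¹} :=
  zpowers_le.mpr (subset_closure (Set.mem_insert _ _))

theorem Subgroup.zpowers_le_closure_pair_right : zpowers (t * x * t⁻¹) ≤ closure {x, t * x * t⁻¹} :=
  zpowers_le.mpr (subset_closure (Set.mem_insert_of_mem _ rfl))

noncomputable def conjZPowersEquiv :
    (zpowers x).subgroupOf (closure {x, t * x * t⁻¹}) ≃*
      (zpowers (t * x * t⁻¹)).subgroupOf (closure {x, t * x * t⁻¹}) :=
  (subgroupOfEquivOfLe (zpowers_le_closure_pair_left x t)).trans <|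
    ((MulAut.conj t).subgroupMap _).trans <|
      (MulEquiv.subgroupCongr (by rw [MonoidHom.map_zpowers]; rfl)).trans
        (subgroupOfEquivOfLe (zpowers_le_closure_pair_right x t)).symm

theorem coe_coe_conjZPowersEquiv (a : (zpowers x).subgroupOf (closure {x, t * x * t⁻¹})) :
    ((conjZPowersEquiv x t a : closure {x, t * x * t⁻¹}) : Γ) = t * a * t⁻¹ :=
  rfl

abbrev ConjHNN : Type _ :=
  HNNExtension (closure {x, t * x * t⁻¹}) _ _ (conjZPowersEquiv x t)

noncomputable def ConjHNN.lift : ConjHNN x t →* Γ :=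
  HNNExtension.lift (closure {x, t * x * t⁻¹}).subtype t fun a => by
    simp [coe_coe_conjZPowersEquiv]

noncomputable def ConjHNN.gen : ConjHNN x t :=
  HNNExtension.of ⟨x, subset_closure (Set.mem_insert _ _)⟩

@[simp]
theorem ConjHNN.lift_of (a : closure {x, t * x * t⁻¹}) : lift x t (HNNExtension.of a) = a :=
  HNNExtension.lift_of _ _ _ _

@[simp]
theorem ConjHNN.lift_gen : lift x t (gen x t) = x := lift_of x t _

@[simp]
theorem ConjHNN.lift_t : lift x t HNNExtension.t = t := HNNExtension.lift_t _ _ _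

theorem ConjHNN.rhoWord_gen_t {k : ℕ} (h : rhoWord k x t = 1) :
    rhoWord k (gen x t) HNNExtension.t = 1 := by
  have hconj : (HNNExtension.t * gen x t * HNNExtension.t⁻¹ : ConjHNN x t) =
      HNNExtension.of ⟨t * x * t⁻¹, subset_closure (Set.mem_insert_of_mem _ rfl)⟩ :=
    (HNNExtension.equiv_eq_conj ⟨_, mem_subgroupOf.mpr (mem_zpowers x)⟩).symm
  rw [rhoWord, hconj, gen, ← map_inv, ← map_zpow, ← map_mul, ← map_mul, ← map_mul]
  exact (map_eq_one_iff _ (HNNExtension.of_injective _)).mpr (Subtype.ext h)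

theorem ConjHNN.gen_pow {k : ℕ} (h : x ^ k = 1) : gen x t ^ k = 1 := by
  rw [gen, ← map_pow]
  exact (map_eq_one_iff _ (HNNExtension.of_injective _)).mpr (Subtype.ext h)

end ConjHNN

open Monoid in
theorem exists_isConj_mem_closure_of_leftInverse {ι Γ : Type*} [Nonempty ι] [Group Γ]
    (x t : ι → Γ) (s : Γ →* CoprodI fun i => ConjHNN (x i) (t i))
    (hs : ∀ g, CoprodI.lift (fun i => ConjHNN.lift (x i) (t i)) (s g) = g)
    {g : Γ} (hg : IsOfFinOrder g) :
    ∃ i, ∃ h ∈ closure {x i, t i * x i * (t i)⁻¹}, IsConj g h := by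
  have hsg := s.isOfFinOrder hg
  obtain ⟨i, h, hconj⟩ := CoprodI.exists_isConj_of_of_isOfFinOrder hsg
  have hh : IsOfFinOrder h :=
    (CoprodI.of_injective i).isOfFinOrder_iff.mp (hconj.isOfFinOrder hsg)
  obtain ⟨a, ha⟩ := HNNExtension.exists_isConj_of_of_isOfFinOrder hh
  refine ⟨i, a, a.2, ?_⟩
  simpa [hs] using (CoprodI.lift fun i => ConjHNN.lift (x i) (t i)).map_isConj
    (hconj.trans (CoprodI.of.map_isConj ha))

abbrev Gamma (m n : ℕ) : Type :=
  PresentedGroup ({rhoWord m (FreeGroup.of 0) (FreeGroup.of 1),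
    rhoWord n (FreeGroup.of 2) (FreeGroup.of 3), FreeGroup.of 0 ^ m, FreeGroup.of 2 ^ n} :
      Set (FreeGroup (Fin 4)))

namespace Gamma

variable (m n : ℕ)

def X (b : Bool) : Gamma m n := PresentedGroup.of (cond b 0 2)

def T (b : Bool) : Gamma m n := PresentedGroup.of (cond b 1 3)

theorem rhoWord_X_T (b : Bool) : rhoWord (cond b m n) (X m n b) (T m n b) = 1 := by
  rw [X, T, PresentedGroup.of, PresentedGroup.of, ← map_rhoWord]
  cases b <;> exact PresentedGroup.one_of_mem (by simp)

theorem X_pow (b : Bool) : X m n b ^ (cond b m n) = 1 := by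
  rw [X, PresentedGroup.of, ← map_pow]
  cases b <;> exact PresentedGroup.one_of_mem (by simp)

abbrev Factors : Bool → Type := fun b => ConjHNN (X m n b) (T m n b)

noncomputable def toFactor : Fin 4 → Monoid.CoprodI (Factors m n) :=
  ![Monoid.CoprodI.of (i := true) (ConjHNN.gen _ _), Monoid.CoprodI.of (i := true) HNNExtension.t,
    Monoid.CoprodI.of (i := false) (ConjHNN.gen _ _), Monoid.CoprodI.of (i := false) HNNExtension.t]

theorem rhoWord_of_gen_t (b : Bool) :
    rhoWord (cond b m n) (Monoid.CoprodI.of (i := b) (ConjHNN.gen (X m n b) (T m n b)) :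
      Monoid.CoprodI (Factors m n)) (Monoid.CoprodI.of (i := b) HNNExtension.t) = 1 := by
  rw [← map_rhoWord, ConjHNN.rhoWord_gen_t _ _ (rhoWord_X_T m n b), map_one]

theorem of_gen_pow (b : Bool) :
    (Monoid.CoprodI.of (i := b) (ConjHNN.gen (X m n b) (T m n b)) :
      Monoid.CoprodI (Factors m n)) ^ (cond b m n) = 1 := by
  rw [← map_pow, ConjHNN.gen_pow _ _ (X_pow m n b), map_one]

noncomputable def toCoprod : Gamma m n →* Monoid.CoprodI (Factors m n) :=
  PresentedGroup.toGroup (f := toFactor m n) <| by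
    rintro r (rfl | rfl | rfl | rfl) <;> simp only [map_rhoWord, map_pow, FreeGroup.lift_apply_of]
    exacts [rhoWord_of_gen_t m n true, rhoWord_of_gen_t m n false, of_gen_pow m n true,
      of_gen_pow m n false]

theorem lift_toCoprod (g : Gamma m n) :
    Monoid.CoprodI.lift (fun b => ConjHNN.lift (X m n b) (T m n b)) (toCoprod m n g) = g := by
  suffices h : (Monoid.CoprodI.lift fun b => ConjHNN.lift (X m n b) (T m n b)).comp
      (toCoprod m n) = MonoidHom.id (Gamma m n) from DFunLike.congr_fun h g
  refine PresentedGroup.ext fun i => ?_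
  rw [MonoidHom.comp_apply, toCoprod, PresentedGroup.toGroup.of]
  fin_cases i <;> simp [toFactor] <;> rfl

end Gamma

theorem torsion_conjugate_into_Hm_or_Hn_general (m n : ℕ)
    (Xm Tm Xn Tn : PresentedGroup
      ({rhoWord m (FreeGroup.of 0) (FreeGroup.of 1),
        rhoWord n (FreeGroup.of 2) (FreeGroup.of 3),
        FreeGroup.of 0 ^ m, FreeGroup.of 2 ^ n} : Set (FreeGroup (Fin 4))))
    (hXm : Xm = PresentedGroup.of 0) (hTm : Tm = PresentedGroup.of 1)
    (hXn : Xn = PresentedGroup.of 2) (hTn : Tn = PresentedGroup.of 3)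
    (Hm Hn : Subgroup (PresentedGroup
      ({rhoWord m (FreeGroup.of 0) (FreeGroup.of 1),
        rhoWord n (FreeGroup.of 2) (FreeGroup.of 3),
        FreeGroup.of 0 ^ m, FreeGroup.of 2 ^ n} : Set (FreeGroup (Fin 4)))))
    (hHm : Hm = Subgroup.closure {Xm, Tm * Xm * Tm⁻¹})
    (hHn : Hn = Subgroup.closure {Xn, Tn * Xn * Tn⁻¹}) :
    ∀ g, IsOfFinOrder g →
      (∃ h ∈ Hm, IsConj g h) ∨ (∃ h ∈ Hn, IsConj g h) := by
  subst hXm hTm hXn hTn hHm hHn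
  intro g hg
  obtain ⟨b, h, hh, hconj⟩ :=
    exists_isConj_mem_closure_of_leftInverse _ _ _ (Gamma.lift_toCoprod m n) hg
  cases b
  · exact Or.inr ⟨h, hh, hconj⟩
  · exact Or.inl ⟨h, hh, hconj⟩

/-- For `m, n ≥ 1`, every element of finite order in the presented group
`Γ_{m,n} = ⟨x_m, t_m, x_n, t_n | ρ_m(x_m,t_m), ρ_n(x_n,t_n), x_m^m, x_n^n⟩` is conjugate
in `Γ_{m,n}` to an element of the subgroup `H_m = ⟨x_m, t_m x_m t_m⁻¹⟩` or to an element
of the subgroup `H_n = ⟨x_n, t_n x_n t_n⁻¹⟩`. -/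
theorem torsion_conjugate_into_Hm_or_Hn (m n : ℕ) (hm : 1 ≤ m) (hn : 1 ≤ n)
    (Xm Tm Xn Tn : PresentedGroup
      ({rhoWord m (FreeGroup.of 0) (FreeGroup.of 1),
        rhoWord n (FreeGroup.of 2) (FreeGroup.of 3),
        FreeGroup.of 0 ^ m, FreeGroup.of 2 ^ n} : Set (FreeGroup (Fin 4))))
    (hXm : Xm = PresentedGroup.of 0) (hTm : Tm = PresentedGroup.of 1)
    (hXn : Xn = PresentedGroup.of 2) (hTn : Tn = PresentedGroup.of 3)
    (Hm Hn : Subgroup (PresentedGroup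
      ({rhoWord m (FreeGroup.of 0) (FreeGroup.of 1),
        rhoWord n (FreeGroup.of 2) (FreeGroup.of 3),
        FreeGroup.of 0 ^ m, FreeGroup.of 2 ^ n} : Set (FreeGroup (Fin 4)))))
    (hHm : Hm = Subgroup.closure {Xm, Tm * Xm * Tm⁻¹})
    (hHn : Hn = Subgroup.closure {Xn, Tn * Xn * Tn⁻¹}) :
    ∀ g, IsOfFinOrder g →
      (∃ h ∈ Hm, IsConj g h) ∨ (∃ h ∈ Hn, IsConj g h) :=
  torsion_conjugate_into_Hm_or_Hn_general m n Xm Tm Xn Tn hXm hTm hXn hTn Hm Hn hHm hHn
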